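/- Let m, r : [0,∞) → [0,∞) be continuous functions with ∫₀^∞ r(s) ds < ∞ and with the product m·r integrable on [0,∞). Let A ≥ 0 and M > 0, and suppose that for every t ∈ [0,∞), m(t) ≤ A + M ∫_t^∞ m(s) r(s) ds. Then for every t ∈ [0,∞), m(t) ≤ A · exp( M ∫_t^∞ r(s) ds ). -/

import Mathlib

/-!
Put `φ t = A + M ∫_t^∞ m r` and `R t = ∫_t^∞ r`. Differentiating the tail integrals gives
`(φ · e^{-M R})' = M r e^{-M R} (φ - m) ≥ 0`, so `φ e^{-M R}` is nondecreasing on `[0, ∞)`.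
Both tails vanish at infinity, so it increases to `A`; hence `m ≤ φ ≤ A e^{M R}`.
-/

open MeasureTheory Set Filter Topology

namespace MeasureTheory.IntegrableOn

variable {E : Type*} [NormedAddCommGroup E] [NormedSpace ℝ E]
  {f : ℝ → E} {a : ℝ}

theorem setIntegral_Ioi_eq_sub_intervalIntegral (hf : IntegrableOn f (Ioi a)) {t : ℝ}
    (ht : a ≤ t) : ∫ s in Ioi t, f s = (∫ s in Ioi a, f s) - ∫ s in a..t, f s := by
  rw [← intervalIntegral.integral_Ioi_sub_Ioi hf ht, sub_sub_cancel]

theorem hasDerivAt_setIntegral_Ioi [CompleteSpace E] (hf : IntegrableOn f (Ioi a)) {t : ℝ}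
    (ht : a < t) (hmeas : StronglyMeasurableAtFilter f (𝓝 t)) (hcont : ContinuousAt f t) :
    HasDerivAt (fun u => ∫ s in Ioi u, f s) (-f t) t := by
  have hint : IntervalIntegrable f volume a t :=
    (intervalIntegrable_iff_integrableOn_Ioc_of_le ht.le).2 (hf.mono_set Ioc_subset_Ioi_self)
  refine (((intervalIntegral.integral_hasDerivAt_right hint hmeas hcont).const_sub
    (∫ s in Ioi a, f s))).congr_of_eventuallyEq ?_
  filter_upwards [Ioi_mem_nhds ht] with u hu
  exact hf.setIntegral_Ioi_eq_sub_intervalIntegral hu.le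

theorem tendsto_setIntegral_Ioi_atTop (hf : IntegrableOn f (Ioi a)) :
    Tendsto (fun t => ∫ s in Ioi t, f s) atTop (𝓝 0) := by
  have hlim := (tendsto_const_nhds (x := ∫ s in Ioi a, f s)).sub
    (intervalIntegral_tendsto_integral_Ioi a hf tendsto_id)
  rw [sub_self] at hlim
  refine hlim.congr' ?_
  filter_upwards [eventually_ge_atTop a] with t ht
  exact (hf.setIntegral_Ioi_eq_sub_intervalIntegral ht).symm

end MeasureTheory.IntegrableOn

section BackwardGronwall

variable {m r : ℝ → ℝ} {a A M : ℝ}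

noncomputable def backwardGronwallWeight (m r : ℝ → ℝ) (A M t : ℝ) : ℝ :=
  (A + M * ∫ s in Ioi t, m s * r s) * Real.exp (-M * ∫ s in Ioi t, r s)

theorem hasDerivAt_backwardGronwallWeight (hm : ContinuousOn m (Ioi a))
    (hr : ContinuousOn r (Ioi a)) (hr_int : IntegrableOn r (Ioi a))
    (hmr_int : IntegrableOn (fun s => m s * r s) (Ioi a)) {t : ℝ} (ht : a < t) :
    HasDerivAt (backwardGronwallWeight m r A M)
      (M * r t * Real.exp (-M * ∫ s in Ioi t, r s) *
        (A + M * (∫ s in Ioi t, m s * r s) - m t)) t := by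
  have hmr := hm.mul hr
  have hmr' := hmr_int.hasDerivAt_setIntegral_Ioi ht
    (hmr.stronglyMeasurableAtFilter isOpen_Ioi t ht) (hmr.continuousAt (Ioi_mem_nhds ht))
  have hr' := hr_int.hasDerivAt_setIntegral_Ioi ht
    (hr.stronglyMeasurableAtFilter isOpen_Ioi t ht) (hr.continuousAt (Ioi_mem_nhds ht))
  refine (((hmr'.const_mul M).const_add A).fun_mul (hr'.const_mul (-M)).exp).congr_deriv ?_
  ring

theorem continuousOn_backwardGronwallWeight (hr_int : IntegrableOn r (Ioi a))
    (hmr_int : IntegrableOn (fun s => m s * r s) (Ioi a)) :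
    ContinuousOn (backwardGronwallWeight m r A M) (Ici a) :=
  (continuousOn_const.add (continuousOn_const.mul hmr_int.continuousOn_Ici_primitive_Ioi)).mul
    (continuousOn_const.mul hr_int.continuousOn_Ici_primitive_Ioi).rexp

theorem monotoneOn_backwardGronwallWeight
    (hm : ContinuousOn m (Ioi a)) (hr : ContinuousOn r (Ioi a))
    (hr_nonneg : ∀ t ∈ Ioi a, 0 ≤ r t) (hr_int : IntegrableOn r (Ioi a))
    (hmr_int : IntegrableOn (fun s => m s * r s) (Ioi a)) (hM : 0 ≤ M)
    (hineq : ∀ t ∈ Ioi a, m t ≤ A + M * ∫ s in Ioi t, m s * r s) :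
    MonotoneOn (backwardGronwallWeight m r A M) (Ici a) := by
  refine monotoneOn_of_hasDerivWithinAt_nonneg (convex_Ici a)
    (continuousOn_backwardGronwallWeight hr_int hmr_int)
    (fun t ht => (hasDerivAt_backwardGronwallWeight hm hr hr_int hmr_int
      (by rwa [interior_Ici] at ht)).hasDerivWithinAt) fun t ht => ?_
  rw [interior_Ici] at ht
  have hgap := sub_nonneg.2 (hineq t ht)
  have hrt := hr_nonneg t ht
  positivity

theorem tendsto_backwardGronwallWeight_atTop (hr_int : IntegrableOn r (Ioi a))
    (hmr_int : IntegrableOn (fun s => m s * r s) (Ioi a)) :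
    Tendsto (backwardGronwallWeight m r A M) atTop (𝓝 A) := by
  have hlim := ((hmr_int.tendsto_setIntegral_Ioi_atTop.const_mul M).const_add A).mul
    (hr_int.tendsto_setIntegral_Ioi_atTop.const_mul (-M)).rexp
  rw [mul_zero, add_zero, mul_zero, Real.exp_zero, mul_one] at hlim
  exact hlim

end BackwardGronwall

theorem infinite_horizon_backward_gronwall_general
    (m r : ℝ → ℝ)
    (hm_cont : ContinuousOn m (Ici (0 : ℝ)))
    (hr_cont : ContinuousOn r (Ici (0 : ℝ)))
    (hr_nonneg : ∀ t ∈ Ici (0 : ℝ), 0 ≤ r t)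
    (hr_int : IntegrableOn r (Ioi (0 : ℝ)))
    (hmr_int : IntegrableOn (fun s => m s * r s) (Ioi (0 : ℝ)))
    (A M : ℝ) (hM : 0 < M)
    (hineq : ∀ t ∈ Ici (0 : ℝ), m t ≤ A + M * ∫ s in Ioi t, m s * r s) :
    ∀ t ∈ Ici (0 : ℝ), m t ≤ A * Real.exp (M * ∫ s in Ioi t, r s) := by
  have hmono := monotoneOn_backwardGronwallWeight
    (hm_cont.mono Ioi_subset_Ici_self) (hr_cont.mono Ioi_subset_Ici_self)
    (fun t ht => hr_nonneg t (Ioi_subset_Ici_self ht)) hr_int hmr_int hM.le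
    (fun t ht => hineq t (Ioi_subset_Ici_self ht))
  have hlim := tendsto_backwardGronwallWeight_atTop (A := A) (M := M) hr_int hmr_int
  intro t ht
  have hweight : backwardGronwallWeight m r A M t ≤ A :=
    ge_of_tendsto hlim (eventually_atTop.2 ⟨t, fun T hT => hmono ht (ht.trans hT) hT⟩)
  calc m t ≤ A + M * ∫ s in Ioi t, m s * r s := hineq t ht
    _ = backwardGronwallWeight m r A M t * Real.exp (M * ∫ s in Ioi t, r s) := by
      rw [backwardGronwallWeight, mul_assoc, ← Real.exp_add, neg_mul, neg_add_cancel,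
        Real.exp_zero, mul_one]
    _ ≤ A * Real.exp (M * ∫ s in Ioi t, r s) := by gcongr

/-- Backward Gronwall-type lemma on the infinite horizon `[0, ∞)`:
if `m`, `r` are continuous nonnegative functions on `[0, ∞)`, `r` is integrable on `(0, ∞)`,
the product `m * r` is integrable on `(0, ∞)`, `A ≥ 0`, `M > 0`, and
`m t ≤ A + M ∫_t^∞ m s * r s ds` for all `t ≥ 0`, then
`m t ≤ A * exp (M ∫_t^∞ r s ds)` for all `t ≥ 0`. -/
theorem infinite_horizon_backward_gronwall
    (m r : ℝ → ℝ)
    (hm_cont : ContinuousOn m (Ici (0 : ℝ)))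
    (hr_cont : ContinuousOn r (Ici (0 : ℝ)))
    (hm_nonneg : ∀ t ∈ Ici (0 : ℝ), 0 ≤ m t)
    (hr_nonneg : ∀ t ∈ Ici (0 : ℝ), 0 ≤ r t)
    (hr_int : IntegrableOn r (Ioi (0 : ℝ)))
    (hmr_int : IntegrableOn (fun s => m s * r s) (Ioi (0 : ℝ)))
    (A M : ℝ) (hA : 0 ≤ A) (hM : 0 < M)
    (hineq : ∀ t ∈ Ici (0 : ℝ), m t ≤ A + M * ∫ s in Ioi t, m s * r s) :
    ∀ t ∈ Ici (0 : ℝ), m t ≤ A * Real.exp (M * ∫ s in Ioi t, r s) :=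
  infinite_horizon_backward_gronwall_general m r hm_cont hr_cont hr_nonneg hr_int hmr_int A M hM
    hineq
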